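/- Let C be an additive conjucyclic code of length n over 𝔽₄ equal to Ψ(D) for a binary cyclic code D of length 2n, and let t(x) and r(x) be the generator polynomials of Tr(C^{⊥_Tr}) and Tr(C) respectively (as cyclic codes of length n over 𝔽₂). Then Tr(C^{⊥_Tr}) ⊆ Tr(C)^⊥, i.e., every trace of a trace-dual codeword is Euclidean-orthogonal to every trace of a codeword. -/

import Mathlib

open scoped BigOperators

abbrev F2 := ZMod 2
abbrev F4 := GaloisField 2 2

noncomputable def iota : F2 →+* F4 := algebraMap F2 F4

/-- The trace map of `F4` over `F2`, viewed with values in `F4`: `tr α = α + α²`. -/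
noncomputable def tr (a : F4) : F4 := a + a ^ 2
/-- Cyclic shift: `(c₀,…,c_{m-1}) ↦ (c_{m-1},c₀,…,c_{m-2})`. -/
def cshift {α : Type*} {m : ℕ} (c : Fin m → α) : Fin m → α :=
  fun i => if _ : (i : ℕ) = 0 then c ⟨m - 1, by have := i.isLt; omega⟩
           else c ⟨(i : ℕ) - 1, by have := i.isLt; omega⟩

/-- Conjucyclic shift on `F4ⁿ`: `(c₀,…,c_{n-1}) ↦ (c̄_{n-1},c₀,…,c_{n-2})`,
where conjugation is `α ↦ α²`. -/
noncomputable def Tshift {n : ℕ} (c : Fin n → F4) : Fin n → F4 :=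
  fun i => if _ : (i : ℕ) = 0 then (c ⟨n - 1, by have := i.isLt; omega⟩) ^ 2
           else c ⟨(i : ℕ) - 1, by have := i.isLt; omega⟩

/-- The map `Ψ : F2^{2n} → F4ⁿ`, `Ψ(u)ᵢ = uᵢ + (uᵢ + u_{n+i})ω`. -/
noncomputable def Psi {n : ℕ} (ω : F4) (u : Fin (2 * n) → F2) : Fin n → F4 :=
  fun i => iota (u ⟨(i : ℕ), by have := i.isLt; omega⟩) +
    (iota (u ⟨(i : ℕ), by have := i.isLt; omega⟩) +
      iota (u ⟨n + (i : ℕ), by have := i.isLt; omega⟩)) * ω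

/-- Trace dual of a set of vectors in `F4ⁿ` w.r.t. `⟨x,y⟩ = Tr(∑ xᵢyᵢ)`. -/
noncomputable def traceDual {n : ℕ} (S : Set (Fin n → F4)) : Set (Fin n → F4) :=
  {x | ∀ c ∈ S, tr (∑ i, x i * c i) = 0}

/-- Euclidean dual of a set of vectors in `F2^m`. -/
def dualE {m : ℕ} (S : Set (Fin m → F2)) : Set (Fin m → F2) :=
  {b | ∀ a ∈ S, ∑ i, a i * b i = 0}

/-- The folding map `Φ : F2^{2n} → F2ⁿ`, `Φ(a)ᵢ = aᵢ + a_{n+i}`. -/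
def Phi {n : ℕ} (a : Fin (2 * n) → F2) : Fin n → F2 :=
  fun i => a ⟨(i : ℕ), by have := i.isLt; omega⟩ +
    a ⟨n + (i : ℕ), by have := i.isLt; omega⟩

/-- Coordinatewise trace of a vector in `F4ⁿ`. -/
noncomputable def trVec {n : ℕ} (c : Fin n → F4) : Fin n → F4 :=
  fun i => tr (c i)

/-!
For `a ∈ D` and `σ` the cyclic shift, the word `u = a + σⁿa` again lies in `D`, and both of its
halves equal `Φ(a)`; hence `Ψ(u) = Φ(a)` is a binary codeword of `C = Ψ(D)`. On the other hand
`Tr(Ψ(a)) = Φ(a)` coordinatewise, and `Tr` is `F2`-linear, so for `x` in the trace dual of `C`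
`∑ Tr(xᵢ) Tr(Ψ(a)ᵢ) = Tr(∑ xᵢ Ψ(u)ᵢ) = 0`.
-/

open Fin.NatCast Fin.CommRing

section CyclicShift

variable {α : Type*}

lemma cshift_apply {m : ℕ} [NeZero m] (a : Fin m → α) (i : Fin m) : cshift a i = a (i - 1) := by
  obtain ⟨k, rfl⟩ := Nat.exists_eq_succ_of_ne_zero (NeZero.ne m)
  unfold cshift
  split_ifs with h <;> congr 1 <;> ext <;> simp [Fin.coe_sub_one, Fin.ext_iff, h]

lemma cshift_iterate_apply {m : ℕ} [NeZero m] (k : ℕ) (a : Fin m → α) (i : Fin m) :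
    cshift^[k] a i = a (i - k) := by
  induction k generalizing i with
  | zero => simp
  | succ k ih =>
    rw [Function.iterate_succ_apply', cshift_apply, ih]
    congr 1
    push_cast
    ring

lemma cshift_iterate_half_apply_low {n : ℕ} (a : Fin (2 * n) → α) (i : Fin n) :
    cshift^[n] a ⟨i, by have := i.isLt; omega⟩ = a ⟨n + i, by have := i.isLt; omega⟩ := by
  have hi := i.isLt
  have : NeZero (2 * n) := ⟨by omega⟩
  rw [cshift_iterate_apply]
  congr 1
  ext
  rw [Fin.val_sub, Fin.val_natCast, Nat.mod_eq_of_lt (by omega : n < 2 * n)]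
  change (2 * n - n + i) % (2 * n) = n + i
  rw [show 2 * n - n + i = n + i by omega]
  exact Nat.mod_eq_of_lt (by omega)

lemma cshift_iterate_half_apply_high {n : ℕ} (a : Fin (2 * n) → α) (i : Fin n) :
    cshift^[n] a ⟨n + i, by have := i.isLt; omega⟩ = a ⟨i, by have := i.isLt; omega⟩ := by
  have hi := i.isLt
  have : NeZero (2 * n) := ⟨by omega⟩
  rw [cshift_iterate_apply]
  congr 1
  ext
  rw [Fin.val_sub, Fin.val_natCast, Nat.mod_eq_of_lt (by omega : n < 2 * n)]
  change (2 * n - n + (n + i)) % (2 * n) = i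
  rw [show 2 * n - n + (n + i) = i + 2 * n by omega, Nat.add_mod_right]
  exact Nat.mod_eq_of_lt (by omega)

end CyclicShift

section Trace

lemma iota_sq (t : F2) : iota t ^ 2 = iota t := by
  rw [← map_pow, ZMod.pow_card]

lemma tr_sum {ι : Type*} (s : Finset ι) (f : ι → F4) :
    tr (∑ i ∈ s, f i) = ∑ i ∈ s, tr (f i) := by
  unfold tr
  rw [sum_pow_char, ← Finset.sum_add_distrib]

lemma tr_mul_iota (x : F4) (t : F2) : tr (x * iota t) = tr x * iota t := by
  unfold tr
  rw [mul_pow, iota_sq]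
  ring

-- `Tr` vanishes on `F2`, and `Tr ω = ω + ω² = 1`.
lemma tr_Psi {n : ℕ} {ω : F4} (hω : ω ^ 2 = ω + 1) (a : Fin (2 * n) → F2) (i : Fin n) :
    tr (Psi ω a i) = iota (Phi a i) := by
  unfold tr Psi Phi
  rw [map_add]
  set p := iota (a ⟨i, by have := i.isLt; omega⟩)
  set q := iota (a ⟨n + i, by have := i.isLt; omega⟩)
  rw [CharTwo.add_sq, mul_pow, CharTwo.add_sq, iota_sq, iota_sq, hω]
  linear_combination (p + (p + q) * ω) * (CharTwo.two_eq_zero : (2 : F4) = 0)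

end Trace

lemma Psi_add_cshift_iterate_half {n : ℕ} (ω : F4) (a : Fin (2 * n) → F2) :
    Psi ω (a + cshift^[n] a) = fun i => iota (Phi a i) := by
  funext i
  simp only [Psi, Phi, Pi.add_apply, cshift_iterate_half_apply_low, cshift_iterate_half_apply_high,
    add_comm (a ⟨n + i, _⟩), CharTwo.add_self_eq_zero, zero_mul, add_zero]

/-- for `C = Ψ(D)` with `D` a binary cyclic code of length `2n`,
`Tr(C^{⊥Tr}) ⊆ Tr(C)^⊥`: every trace of a trace-dual codeword is Euclidean-orthogonal
to every trace of a codeword. -/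
theorem stmt18 (n : ℕ) (ω : F4) (hω : ω ^ 2 = ω + 1)
    (D : Submodule F2 (Fin (2 * n) → F2)) (hcyc : ∀ a ∈ D, cshift a ∈ D) :
    ∀ x ∈ traceDual (Psi ω '' (D : Set (Fin (2 * n) → F2))),
      ∀ c ∈ Psi ω '' (D : Set (Fin (2 * n) → F2)),
        ∑ i, tr (x i) * tr (c i) = 0 := by
  rintro x hx _ ⟨a, ha, rfl⟩
  have hmem : a + cshift^[n] a ∈ D := D.add_mem ha (Set.MapsTo.iterate hcyc n ha)
  calc ∑ i, tr (x i) * tr (Psi ω a i)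
      = ∑ i, tr (x i * Psi ω (a + cshift^[n] a) i) := by
        simp only [tr_Psi hω, Psi_add_cshift_iterate_half, tr_mul_iota]
    _ = tr (∑ i, x i * Psi ω (a + cshift^[n] a) i) := (tr_sum _ _).symm
    _ = 0 := hx _ ⟨_, hmem, rfl⟩
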